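/- Let T ⊂ ℝ^d be a nonempty closed convex set containing the origin, and for x ∈ ℝ^d, σ > 0 define h_σ(x) = sup_{t ∈ T} { ⟨x,t⟩ − ‖t‖²/(2σ) }. Then for each fixed x, the map σ ↦ h_σ(x) is differentiable on (0,∞), with derivative (d/dσ) h_σ(x) = (1/2)‖Π_{T/σ}(x)‖², where Π_{T/σ} denotes the Euclidean metric projection onto the set T/σ. -/

import Mathlib

/-!
`h_ν(x)` is the supremum over `t ∈ T` of `φ_t(ν) = ⟨x, t⟩ - ‖t‖² / (2ν)`, attained at
`t_ν = ν Π_{T/ν}(x) = Π_T(ν x)`. Comparing `φ_{t_σ}` and `φ_{t_ν}` at `σ` and `ν` squeezes the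
difference quotient of `h` at `σ` between `‖t_σ‖² / (2σν)` and `‖t_ν‖² / (2σν)` (Danskin's
envelope argument). The projection `Π_T` is nonexpansive, so `t_ν → t_σ`, and both bounds tend
to `‖t_σ‖² / (2σ²) = ‖Π_{T/σ}(x)‖² / 2`.
-/

open Filter Set Topology InnerProductSpace
open scoped Pointwise

section Projection

variable {E : Type*} [NormedAddCommGroup E] [InnerProductSpace ℝ E] {K : Set E} {u v : E}

theorem IsMinOn.real_inner_sub_le_zero (hK : Convex ℝ K) (hv : v ∈ K)
    (hmin : IsMinOn (fun t => ‖u - t‖) K v) {w : E} (hw : w ∈ K) :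
    ⟪u - v, w - v⟫_ℝ ≤ 0 :=
  (norm_eq_iInf_iff_real_inner_le_zero hK hv).mp (hmin.iInf_eq hv).symm w hw

theorem IsMinOn.norm_sub_le (hK : Convex ℝ K) {u₁ u₂ v₁ v₂ : E}
    (hv₁ : v₁ ∈ K) (hm₁ : IsMinOn (fun t => ‖u₁ - t‖) K v₁)
    (hv₂ : v₂ ∈ K) (hm₂ : IsMinOn (fun t => ‖u₂ - t‖) K v₂) :
    ‖v₁ - v₂‖ ≤ ‖u₁ - u₂‖ := by
  have h₁ := hm₁.real_inner_sub_le_zero hK hv₁ hv₂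
  have h₂ := hm₂.real_inner_sub_le_zero hK hv₂ hv₁
  have key : ‖v₁ - v₂‖ ^ 2 ≤ ⟪u₁ - u₂, v₁ - v₂⟫_ℝ := by
    have e : ⟪u₁ - u₂, v₁ - v₂⟫_ℝ - ‖v₁ - v₂‖ ^ 2 =
        -⟪u₁ - v₁, v₂ - v₁⟫_ℝ - ⟪u₂ - v₂, v₁ - v₂⟫_ℝ := by
      rw [← real_inner_self_eq_norm_sq]
      simp only [inner_sub_left, inner_sub_right]
      ring
    linarith
  have cs := real_inner_le_norm (u₁ - u₂) (v₁ - v₂)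
  nlinarith [norm_nonneg (v₁ - v₂), norm_nonneg (u₁ - u₂)]

theorem isMinOn_norm_smul_sub_smul {ν : ℝ} (hν : ν ≠ 0) {x p : E}
    (hp : ∀ s ∈ ν⁻¹ • K, dist x p ≤ dist x s) :
    IsMinOn (fun t => ‖ν • x - t‖) K (ν • p) := by
  intro t ht
  have h := hp (ν⁻¹ • t) (smul_mem_smul_set ht)
  rw [dist_eq_norm, dist_eq_norm] at h
  have e : ν • x - t = ν • (x - ν⁻¹ • t) := by rw [smul_sub, smul_inv_smul₀ hν]
  change ‖ν • x - ν • p‖ ≤ ‖ν • x - t‖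
  rw [e, ← smul_sub, norm_smul, norm_smul]
  gcongr

theorem inner_sub_norm_sq_div_eq {ν : ℝ} (hν : ν ≠ 0) (x t : E) :
    ⟪x, t⟫_ℝ - ‖t‖ ^ 2 / (2 * ν) = ν * ‖x‖ ^ 2 / 2 - ‖ν • x - t‖ ^ 2 / (2 * ν) := by
  rw [norm_sub_sq_real, real_inner_smul_left, norm_smul, Real.norm_eq_abs, mul_pow, sq_abs]
  field_simp
  ring

theorem IsMinOn.isMaxOn_inner_sub_norm_sq_div {ν : ℝ} (hν : 0 < ν) {x : E}
    (hmin : IsMinOn (fun t => ‖ν • x - t‖) K v) :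
    IsMaxOn (fun t => ⟪x, t⟫_ℝ - ‖t‖ ^ 2 / (2 * ν)) K v := by
  intro t ht
  have h : ‖ν • x - v‖ ≤ ‖ν • x - t‖ := hmin ht
  change ⟪x, t⟫_ℝ - ‖t‖ ^ 2 / (2 * ν) ≤ ⟪x, v⟫_ℝ - ‖v‖ ^ 2 / (2 * ν)
  rw [inner_sub_norm_sq_div_eq hν.ne', inner_sub_norm_sq_div_eq hν.ne']
  gcongr

theorem continuousAt_of_isMinOn_norm_smul_sub (hK : Convex ℝ K) {x : E} {t : ℝ → E}
    (ht : ∀ ν, 0 < ν → t ν ∈ K ∧ IsMinOn (fun s => ‖ν • x - s‖) K (t ν)) {σ : ℝ} (hσ : 0 < σ) :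
    ContinuousAt t σ := by
  refine continuousAt_of_locally_lipschitz hσ ‖x‖ fun ν hν => ?_
  have hν : 0 < ν := by
    rw [Real.dist_eq, abs_lt] at hν
    linarith
  calc dist (t ν) (t σ) = ‖t ν - t σ‖ := dist_eq_norm _ _
    _ ≤ ‖ν • x - σ • x‖ := (ht ν hν).2.norm_sub_le hK (ht ν hν).1 (ht σ hσ).1 (ht σ hσ).2
    _ = ‖x‖ * dist ν σ := by rw [← sub_smul, norm_smul, mul_comm, Real.dist_eq, Real.norm_eq_abs]

end Projection

theorem div_mem_uIcc_of_mul_le_of_le_mul {D h a b : ℝ} (hh : h ≠ 0)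
    (ha : h * a ≤ D) (hb : D ≤ h * b) : D / h ∈ uIcc a b := by
  rcases hh.lt_or_gt with hneg | hpos
  · refine mem_uIcc.mpr (Or.inr ⟨?_, ?_⟩)
    · rwa [le_div_iff_of_neg hneg, mul_comm]
    · rwa [div_le_iff_of_neg hneg, mul_comm]
  · refine mem_uIcc.mpr (Or.inl ⟨?_, ?_⟩)
    · rwa [le_div_iff₀ hpos, mul_comm]
    · rwa [div_le_iff₀ hpos, mul_comm]

theorem hasDerivAt_iSup_of_isMaxOn {α : Type*} {A : Set α} {φ : α → ℝ → ℝ} {m : ℝ → α}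
    {s : α → ℝ → ℝ} {σ : ℝ}
    (hmax : ∀ᶠ ν in 𝓝 σ, m ν ∈ A ∧ IsMaxOn (φ · ν) A (m ν))
    (hslope : ∀ᶠ ν in 𝓝 σ, ∀ a, φ a ν - φ a σ = (ν - σ) * s a ν)
    (hs : ContinuousAt (s (m σ)) σ) (hsm : ContinuousAt (fun ν => s (m ν) ν) σ) :
    HasDerivAt (fun ν => ⨆ a : A, φ a ν) (s (m σ) σ) σ := by
  obtain ⟨hmσ, hmaxσ⟩ := hmax.self_of_nhds
  have hsup : (fun ν => ⨆ a : A, φ a ν) =ᶠ[𝓝 σ] fun ν => φ (m ν) ν :=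
    hmax.mono fun ν hν => hν.2.iSup_eq hν.1
  refine HasDerivAt.congr_of_eventuallyEq ?_ hsup
  rw [hasDerivAt_iff_tendsto_slope]
  have hlow : Tendsto (fun ν => min (s (m σ) ν) (s (m ν) ν)) (𝓝[≠] σ) (𝓝 (s (m σ) σ)) := by
    simpa using (hs.tendsto.min hsm.tendsto).mono_left nhdsWithin_le_nhds
  have hupp : Tendsto (fun ν => max (s (m σ) ν) (s (m ν) ν)) (𝓝[≠] σ) (𝓝 (s (m σ) σ)) := by
    simpa using (hs.tendsto.max hsm.tendsto).mono_left nhdsWithin_le_nhds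
  have hbetween : ∀ᶠ ν in 𝓝[≠] σ,
      slope (fun ν => φ (m ν) ν) σ ν ∈ uIcc (s (m σ) ν) (s (m ν) ν) := by
    filter_upwards [nhdsWithin_le_nhds (hmax.and hslope), self_mem_nhdsWithin]
      with ν ⟨⟨hmν, hmaxν⟩, hsl⟩ hne
    rw [slope_def_field]
    refine div_mem_uIcc_of_mul_le_of_le_mul (sub_ne_zero.mpr hne) ?_ ?_
    · rw [← hsl]
      linarith [isMaxOn_iff.mp hmaxν _ hmσ]
    · rw [← hsl]
      linarith [isMaxOn_iff.mp hmaxσ _ hmν]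
  exact tendsto_of_tendsto_of_tendsto_of_le_of_le' hlow hupp
    (hbetween.mono fun _ h => h.1) (hbetween.mono fun _ h => h.2)

theorem statement2 {d : ℕ} (T : Set (EuclideanSpace ℝ (Fin d)))
    (hconv : Convex ℝ T)
    (proj : ℝ → EuclideanSpace ℝ (Fin d) → EuclideanSpace ℝ (Fin d))
    (hproj : ∀ σ : ℝ, 0 < σ → ∀ x, proj σ x ∈ σ⁻¹ • T ∧
      ∀ t ∈ σ⁻¹ • T, dist x (proj σ x) ≤ dist x t) :
    ∀ x : EuclideanSpace ℝ (Fin d), ∀ σ : ℝ, 0 < σ →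
      HasDerivAt
        (fun ν : ℝ => ⨆ t : T,
          ((inner ℝ x (t : EuclideanSpace ℝ (Fin d)) : ℝ) - ‖(t : EuclideanSpace ℝ (Fin d))‖ ^ 2 / (2 * ν)))
        ((1 / 2) * ‖proj σ x‖ ^ 2) σ := by
  intro x σ hσ
  set t : ℝ → EuclideanSpace ℝ (Fin d) := fun ν => ν • proj ν x with ht_def
  have ht : ∀ ν, 0 < ν → t ν ∈ T ∧ IsMinOn (fun s => ‖ν • x - s‖) T (t ν) := fun ν hν =>
    ⟨(mem_inv_smul_set_iff₀ hν.ne' T _).mp (hproj ν hν x).1,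
      isMinOn_norm_smul_sub_smul hν.ne' (hproj ν hν x).2⟩
  refine (hasDerivAt_iSup_of_isMaxOn (A := T) (m := t)
    (φ := fun s ν => ⟪x, s⟫_ℝ - ‖s‖ ^ 2 / (2 * ν)) (s := fun s ν => ‖s‖ ^ 2 / (2 * σ * ν))
    ?_ ?_ ?_ ?_).congr_deriv ?_
  · filter_upwards [Ioi_mem_nhds hσ] with ν hν
    exact ⟨(ht ν hν).1, (ht ν hν).2.isMaxOn_inner_sub_norm_sq_div hν⟩
  · filter_upwards [Ioi_mem_nhds hσ] with ν (hν : 0 < ν) a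
    field_simp
    ring
  · exact continuousAt_const.div (by fun_prop) (by positivity)
  · exact ((continuousAt_of_isMinOn_norm_smul_sub hconv ht hσ).norm.pow 2).div
      (by fun_prop) (by positivity)
  · simp only [ht_def, norm_smul, Real.norm_eq_abs, mul_pow, sq_abs]
    field_simp
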